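/- arXiv:1801.02541 — 2 statements merged into one kernel-verified Lean document; each statement's English description precedes it below -/
import Mathlib

section
/- The efficiency gap equals the seat-share-weighted difference of average competitiveness deviations: EG = (S^B/n)·(C^B - 1/2) - (S^A/n)·(C^A - 1/2), where C^P is the average of C_i over districts won by party P (assuming each party wins at least one district). -/
/-!
District by district, the difference of wasted votes `w_B - w_A` is `m - t/2` when `B` wins
by the margin `m`, `t/2 - m` when `A` wins, and `0` at a tie, where `t = V/n` is the turnout
of a district. Writing `m = t C` and summing over the districts won by each party gives
`W_B - W_A = t (S_B (C_B - 1/2) - S_A (C_A - 1/2))`, and `t / V = 1/n`.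
-/

open Finset

variable {ι K : Type*} [Field K] [LinearOrder K] [IsStrictOrderedRing K]

/-- Votes wasted by a party with `x` votes against `y` in a district of turnout `t`. -/
def wastedVotes (x y t : K) : K := if y < x then x - t / 2 else x

lemma wastedVotes_sub_wastedVotes (a b t : K) :
    wastedVotes b a t - wastedVotes a b t =
      (if a < b then |a - b| - t / 2 else 0) - (if b < a then |a - b| - t / 2 else 0) := by
  rcases lt_trichotomy a b with hab | rfl | hba
  · simp only [wastedVotes, hab, ↓reduceIte, hab.not_gt, abs_sub_comm a b,
      abs_of_pos (sub_pos.mpr hab), sub_zero]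
    ring
  · simp [wastedVotes]
  · simp only [wastedVotes, hba.not_gt, ↓reduceIte, hba, abs_of_pos (sub_pos.mpr hba), zero_sub,
      neg_sub]
    ring

lemma sum_wastedVotes_sub_sum_wastedVotes (s : Finset ι) (a b : ι → K) (t : K) :
    ∑ i ∈ s, wastedVotes (b i) (a i) t - ∑ i ∈ s, wastedVotes (a i) (b i) t =
      ∑ i ∈ s with a i < b i, (|a i - b i| - t / 2)
        - ∑ i ∈ s with b i < a i, (|a i - b i| - t / 2) := by
  simp only [← sum_sub_distrib, wastedVotes_sub_wastedVotes, sum_filter]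

lemma card_mul_sum_div_card (s : Finset ι) (f : ι → K) :
    (#s : K) * ((∑ i ∈ s, f i) / #s) = ∑ i ∈ s, f i :=
  mul_div_cancel_of_imp' fun h => by simp [card_eq_zero.mp (Nat.cast_eq_zero.mp h)]

lemma sum_sub_half_eq_mul_card_mul_average (s : Finset ι) (m : ι → K) {t : K} (ht : t ≠ 0) :
    ∑ i ∈ s, (m i - t / 2) = t * (#s * ((∑ i ∈ s, m i / t) / #s - 1 / 2)) := by
  rw [mul_sub, card_mul_sum_div_card, ← sum_div, sum_sub_distrib, sum_const, nsmul_eq_mul]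
  field_simp

theorem efficiency_gap_eq_weighted_differential_competitiveness_general
    (n : ℕ) (hn : 0 < n) (V : ℝ) (hV : 0 < V)
    (VA VB : Fin n → ℝ) :
    let WA : ℝ := ∑ i, (if VB i < VA i then VA i - V / n / 2 else VA i)
    let WB : ℝ := ∑ i, (if VA i < VB i then VB i - V / n / 2 else VB i)
    let EG : ℝ := (WB - WA) / V
    let C : Fin n → ℝ := fun i => |VA i - VB i| / (V / n)
    let SA : ℝ := ((Finset.univ.filter fun i => VB i < VA i).card : ℝ)
    let SB : ℝ := ((Finset.univ.filter fun i => VA i < VB i).card : ℝ)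
    let CA : ℝ := (∑ i ∈ Finset.univ.filter fun i => VB i < VA i, C i) / SA
    let CB : ℝ := (∑ i ∈ Finset.univ.filter fun i => VA i < VB i, C i) / SB
    EG = (SB / n) * (CB - 1 / 2) - (SA / n) * (CA - 1 / 2) := by
  intro WA WB EG C SA SB CA CB
  have ht : V / n ≠ 0 := by positivity
  have hgap : WB - WA = V / n * (SB * (CB - 1 / 2)) - V / n * (SA * (CA - 1 / 2)) := by
    have := sum_wastedVotes_sub_sum_wastedVotes univ VA VB (V / n)
    rwa [sum_sub_half_eq_mul_card_mul_average _ _ ht,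
      sum_sub_half_eq_mul_card_mul_average _ _ ht] at this
  change (WB - WA) / V = _
  rw [hgap]
  field_simp

/-- Cover's formula: the efficiency gap is the seat-share-weighted difference
of the average competitiveness deviations from 1/2. -/
theorem efficiency_gap_eq_weighted_differential_competitiveness
    (n : ℕ) (hn : 0 < n) (V : ℝ) (hV : 0 < V)
    (VA VB : Fin n → ℝ)
    (hnonnegA : ∀ i, 0 ≤ VA i) (hnonnegB : ∀ i, 0 ≤ VB i)
    (hturnout : ∀ i, VA i + VB i = V / n)
    (hnotie : ∀ i, VA i ≠ VB i)
    (hAwins : (Finset.univ.filter fun i => VB i < VA i).Nonempty)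
    (hBwins : (Finset.univ.filter fun i => VA i < VB i).Nonempty) :
    let WA : ℝ := ∑ i, (if VB i < VA i then VA i - V / n / 2 else VA i)
    let WB : ℝ := ∑ i, (if VA i < VB i then VB i - V / n / 2 else VB i)
    let EG : ℝ := (WB - WA) / V
    let C : Fin n → ℝ := fun i => |VA i - VB i| / (V / n)
    let SA : ℝ := ((Finset.univ.filter fun i => VB i < VA i).card : ℝ)
    let SB : ℝ := ((Finset.univ.filter fun i => VA i < VB i).card : ℝ)
    let CA : ℝ := (∑ i ∈ Finset.univ.filter fun i => VB i < VA i, C i) / SA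
    let CB : ℝ := (∑ i ∈ Finset.univ.filter fun i => VA i < VB i, C i) / SB
    EG = (SB / n) * (CB - 1 / 2) - (SA / n) * (CA - 1 / 2) :=
  efficiency_gap_eq_weighted_differential_competitiveness_general n hn V hV VA VB
end

section
/- Under equal turnout, REG_1 = 0 if and only if S_m = V_m; that is, the λ = 1 relative efficiency gap vanishes exactly when seats are proportional to votes. -/
/-!
Write `a`, `b` for the two parties' vote totals, `s`, `t` for their seat counts and `c` for half
the common district size. Winners waste `c` votes fewer than they cast, so `W^A = a - s c` and
`W^B = b - t c`, whence `REG_1 = c (s / a - t / b)`. It vanishes iff `s / a = t / b`, i.e. iff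
`s / (s + t) = a / (a + b)`, and `s + t = n`, `a + b = V` under no ties and equal turnout.
-/

open Finset

theorem Finset.sum_ite_sub_const {ι M : Type*} [AddCommGroup M] (s : Finset ι) (p : ι → Prop)
    [DecidablePred p] (f : ι → M) (c : M) :
    ∑ i ∈ s, (if p i then f i - c else f i) = ∑ i ∈ s, f i - (s.filter p).card • c := by
  have hsplit : ∀ i, (if p i then f i - c else f i) = f i - if p i then c else 0 := by
    intro i
    split_ifs <;> simp
  rw [sum_congr rfl fun i _ => hsplit i, sum_sub_distrib, ← sum_filter, sum_const]

theorem Finset.card_filter_lt_add_card_filter_gt {ι α : Type*} [Fintype ι] [LinearOrder α]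
    {x y : ι → α} (hne : ∀ i, x i ≠ y i) :
    (univ.filter fun i => y i < x i).card + (univ.filter fun i => x i < y i).card =
      Fintype.card ι := by
  have hgt : (univ.filter fun i => x i < y i) = univ.filter fun i => ¬ y i < x i :=
    filter_congr fun i _ => ⟨fun h => h.le.not_gt, fun h => (not_lt.mp h).lt_of_ne (hne i)⟩
  rw [hgt, card_filter_add_card_filter_not, card_univ]

theorem sub_mul_div_sub_sub_mul_div_eq_zero_iff {K : Type*} [Field K] {a b c s t : K}
    (ha : a ≠ 0) (hb : b ≠ 0) (hc : c ≠ 0) :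
    (b - t * c) / b - (a - s * c) / a = 0 ↔ s / a = t / b := by
  have hgap : (b - t * c) / b - (a - s * c) / a = c * (s / a - t / b) := by
    field_simp
    ring
  rw [hgap, mul_eq_zero, sub_eq_zero, or_iff_right hc]

theorem div_eq_div_iff_div_add_eq_div_add {K : Type*} [Field K] {a b s t : K}
    (ha : a ≠ 0) (hb : b ≠ 0) (hst : s + t ≠ 0) (hab : a + b ≠ 0) :
    s / a = t / b ↔ s / (s + t) = a / (a + b) := by
  rw [div_eq_div_iff ha hb, div_eq_div_iff hst hab]
  constructor <;> intro h <;> linear_combination h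

theorem relative_efficiency_gap_one_vanishes_iff_proportional_general
    (n : ℕ) (hn : 0 < n) (V : ℝ) (hV : 0 < V)
    (VA VB : Fin n → ℝ)
    (hturnout : ∀ i, VA i + VB i = V / n)
    (hnotie : ∀ i, VA i ≠ VB i)
    (hApos : 0 < ∑ i, VA i) (hBpos : 0 < ∑ i, VB i) :
    let WA : ℝ := ∑ i, (if VB i < VA i then VA i - V / n / 2 else VA i)
    let WB : ℝ := ∑ i, (if VA i < VB i then VB i - V / n / 2 else VB i)
    let REG : ℝ := WB / (∑ i, VB i) - WA / (∑ i, VA i)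
    let Sm : ℝ := ((Finset.univ.filter fun i => VB i < VA i).card : ℝ) / n - 1 / 2
    let Vm : ℝ := (∑ i, VA i) / V - 1 / 2
    (REG = 0 ↔ Sm = Vm) := by
  intro WA WB REG Sm Vm
  have hn₀ : (n : ℝ) ≠ 0 := Nat.cast_ne_zero.mpr hn.ne'
  have hc : V / n / 2 ≠ 0 := by positivity
  have hseats : ((univ.filter fun i => VB i < VA i).card : ℝ)
      + (univ.filter fun i => VA i < VB i).card = n := by
    exact_mod_cast (card_filter_lt_add_card_filter_gt hnotie).trans (Fintype.card_fin n)
  have hvotes : ∑ i, VA i + ∑ i, VB i = V := by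
    rw [← sum_add_distrib, sum_congr rfl fun i _ => hturnout i, sum_const, card_univ,
      Fintype.card_fin, nsmul_eq_mul, mul_div_cancel₀ _ hn₀]
  simp only [REG, WA, WB, Sm, Vm, sum_ite_sub_const, nsmul_eq_mul, sub_left_inj]
  rw [sub_mul_div_sub_sub_mul_div_eq_zero_iff hApos.ne' hBpos.ne' hc,
    div_eq_div_iff_div_add_eq_div_add hApos.ne' hBpos.ne' (hseats ▸ hn₀) (hvotes ▸ hV.ne'),
    hseats, hvotes]

/-- Under equal turnout, `REG_1 = 0` if and only if `S_m = V_m`: the λ = 1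
relative efficiency gap vanishes exactly at proportionality. -/
theorem relative_efficiency_gap_one_vanishes_iff_proportional
    (n : ℕ) (hn : 0 < n) (V : ℝ) (hV : 0 < V)
    (VA VB : Fin n → ℝ)
    (hnonnegA : ∀ i, 0 ≤ VA i) (hnonnegB : ∀ i, 0 ≤ VB i)
    (hturnout : ∀ i, VA i + VB i = V / n)
    (hnotie : ∀ i, VA i ≠ VB i)
    (hApos : 0 < ∑ i, VA i) (hBpos : 0 < ∑ i, VB i) :
    let WA : ℝ := ∑ i, (if VB i < VA i then VA i - V / n / 2 else VA i)
    let WB : ℝ := ∑ i, (if VA i < VB i then VB i - V / n / 2 else VB i)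
    let REG : ℝ := WB / (∑ i, VB i) - WA / (∑ i, VA i)
    let Sm : ℝ := ((Finset.univ.filter fun i => VB i < VA i).card : ℝ) / n - 1 / 2
    let Vm : ℝ := (∑ i, VA i) / V - 1 / 2
    (REG = 0 ↔ Sm = Vm) :=
  relative_efficiency_gap_one_vanishes_iff_proportional_general n hn V hV VA VB hturnout hnotie
    hApos hBpos
end
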